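/- For any subset S ⊆ V of a graph G and any β ≥ 1, σ_{S,β}(v) ≥ ℓ_β(v) for every v ∈ V, where ℓ_β = σ_{V,β} is the natural β-partition. -/

import Mathlib

open Classical

variable {V : Type*}

/-- `G` has arboricity at most `a`: every subgraph `H` with at least `2` vertices
satisfies `⌈|E(H)|/(|V(H)|-1)⌉ ≤ a`, i.e. `|E(H)| ≤ a * (|V(H)| - 1)`. -/
def HasArboricity (G : SimpleGraph V) (a : ℕ) : Prop :=
  ∀ H : G.Subgraph, 2 ≤ H.verts.ncard → H.edgeSet.ncard ≤ a * (H.verts.ncard - 1)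

/-- Vertices assigned a layer `≤ i` in the iterative construction of the
`S`-induced `β`-partition. -/
noncomputable def assignedUpTo (G : SimpleGraph V) (S : Set V) (β : ℕ) : ℕ → Set V
  | 0 => {v | v ∈ S ∧ (G.neighborSet v).ncard ≤ β}
  | (i+1) => assignedUpTo G S β i ∪
      {v | v ∈ S ∧ ((G.neighborSet v) \ assignedUpTo G S β i).ncard ≤ β}

/-- The `S`-induced `β`-partition `σ_{S,β} : V → ℕ∞`. -/
noncomputable def indSigma (G : SimpleGraph V) (S : Set V) (β : ℕ) (v : V) : ℕ∞ :=
  if _h : ∃ i, v ∈ assignedUpTo G S β i then (sInf {i | v ∈ assignedUpTo G S β i} : ℕ) else ⊤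

/-- Auxiliary definition of the dependency graph, by fuel on the layer. -/
noncomputable def depAux (G : SimpleGraph V) (σ : V → ℕ∞) : ℕ → V → Set V
  | 0, v => if σ v = 0 then {v} else ∅
  | (n+1), v => if σ v = ((n+1 : ℕ) : ℕ∞)
      then insert v (⋃ w ∈ {w | G.Adj v w ∧ σ w < σ v}, depAux G σ n w)
      else depAux G σ n v

/-- The dependency graph `D(σ, v)`. -/
noncomputable def depGraph (G : SimpleGraph V) (σ : V → ℕ∞) (v : V) : Set V :=
  depAux G σ (σ v).toNat v

/-- A partial `β`-partition: every node with finite layer has at most `β`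
neighbors in equal or higher layers. -/
def IsPartialBetaPartition (G : SimpleGraph V) (β : ℕ) (lam : V → ℕ∞) : Prop :=
  ∀ v, lam v ≠ ⊤ → {w | G.Adj v w ∧ lam v ≤ lam w}.ncard ≤ β

lemma assignedUpTo_mono (G : SimpleGraph V) (S : Set V) (β : ℕ) :
    Monotone (assignedUpTo G S β) :=
  monotone_nat_of_le_succ fun _ => Set.subset_union_left

lemma assignedUpTo_subset_of_subset (G : SimpleGraph V) {S T : Set V} (β : ℕ) (hST : S ⊆ T) :
    ∀ i, assignedUpTo G S β i ⊆ assignedUpTo G T β i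
  | 0 => fun _ hv => ⟨hST hv.1, hv.2⟩
  | i + 1 => by
    rintro v (hv | ⟨hvS, hdeg⟩)
    · exact Or.inl (assignedUpTo_subset_of_subset G β hST i hv)
    by_cases hfin : (G.neighborSet v).Finite
    · refine Or.inr ⟨hST hvS, le_trans (Set.ncard_le_ncard ?_ (hfin.subset Set.sdiff_subset)) hdeg⟩
      exact Set.sdiff_subset_sdiff_right (assignedUpTo_subset_of_subset G β hST i)
    -- `Set.ncard` of an infinite set is `0`, so such a vertex already enters at layer `0`.
    · exact Or.inl (assignedUpTo_mono G T β (Nat.zero_le i)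
        ⟨hST hvS, by rw [Set.Infinite.ncard hfin]; exact Nat.zero_le β⟩)

lemma indSigma_le_of_subset (G : SimpleGraph V) {S T : Set V} (β : ℕ) (hST : S ⊆ T) (v : V) :
    indSigma G T β v ≤ indSigma G S β v := by
  unfold indSigma
  by_cases hS : ∃ i, v ∈ assignedUpTo G S β i
  · obtain ⟨i, hi⟩ := hS
    have hT : ∃ i, v ∈ assignedUpTo G T β i := ⟨i, assignedUpTo_subset_of_subset G β hST i hi⟩
    rw [dif_pos hT, dif_pos ⟨i, hi⟩, Nat.cast_le]
    have hfirst : v ∈ assignedUpTo G S β (sInf {i | v ∈ assignedUpTo G S β i}) :=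
      Nat.sInf_mem (s := {i | v ∈ assignedUpTo G S β i}) ⟨i, hi⟩
    exact Nat.sInf_le (assignedUpTo_subset_of_subset G β hST _ hfirst)
  · rw [dif_neg hS]
    exact le_top

theorem natural_partition_le_indSigma_general (G : SimpleGraph V) (S : Set V) (β : ℕ) :
    ∀ v : V, indSigma G Set.univ β v ≤ indSigma G S β v :=
  indSigma_le_of_subset G β (Set.subset_univ S)

/-- For any `S ⊆ V`, `σ_{S,β}(v) ≥ ℓ_β(v)` for every `v`, where
`ℓ_β = σ_{V,β}` is the natural `β`-partition. -/
theorem natural_partition_le_indSigma (G : SimpleGraph V) (S : Set V) (β : ℕ)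
    (hβ : 1 ≤ β) :
    ∀ v : V, indSigma G Set.univ β v ≤ indSigma G S β v :=
  natural_partition_le_indSigma_general G S β
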